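/- arXiv:2604.07697 — 5 statements merged into one kernel-verified Lean document; each statement's English description precedes it below -/
import Mathlib

section
/- For every H ∈ (0, 1/2) there exists a constant c_H > 0 such that for all x ∈ ℝ, ∫_{|y|>1} |y|^{2H-2} · min(1, |x+y|^{2H-2}) dy ≤ c_H · min(1, |x|^{2H-2}). -/
/-!
Write `p = 2H - 2 < -1` and `g z = min 1 |z|^p`. The trivial bound `g ≤ 1` gives the integral
at most `∫_{|y|>1} |y|^p`, which settles `|x| ≤ 1`. For `x ≠ 0` split according to whether
`|y| ≤ |x|/2`: then `|x + y| ≥ |x|/2` and `g (x + y) ≤ (|x|/2)^p`; otherwise `|y|^p ≤ (|x|/2)^p`.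
Pointwise, `|y|^p g (x + y) ≤ (|x|/2)^p (|y|^p + g (x + y))`, and integrating (with `g`
integrable, as `g z ≤ ((1 + |z|)/2)^p`, and the integral translation invariant) gives the decay
`|x|^p`. Only `p < -dim` is used, so the argument holds in any finite-dimensional normed space
with a Haar measure.
-/

open MeasureTheory Real

/-- `min (1, |x|^(2H-2))`, interpreted as `1` when `x = 0`. -/
noncomputable def minPow (H x : ℝ) : ℝ := if x = 0 then 1 else min 1 (|x| ^ (2 * H - 2))

lemma min_one_rpow_le_rpow_one_add_div_two {t p : ℝ} (ht : 0 ≤ t) (hp : p ≤ 0) :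
    min 1 (t ^ p) ≤ ((1 + t) / 2) ^ p := by
  rcases le_total t 1 with ht1 | ht1
  · exact (min_le_left _ _).trans
      (one_le_rpow_of_pos_of_le_one_of_nonpos (by positivity) (by linarith) hp)
  · exact (min_le_right _ _).trans (rpow_le_rpow_of_nonpos (by positivity) (by linarith) hp)

section Normed

variable {E : Type*} [NormedAddCommGroup E] {p : ℝ}

lemma norm_rpow_mul_min_one_le (hp : p ≤ 0) {x : E} (hx : x ≠ 0) (y : E) :
    ‖y‖ ^ p * min 1 (‖x + y‖ ^ p) ≤ (‖x‖ / 2) ^ p * (‖y‖ ^ p + min 1 (‖x + y‖ ^ p)) := by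
  have hx2 : 0 < ‖x‖ / 2 := by positivity
  have hxy0 : 0 ≤ min 1 (‖x + y‖ ^ p) := le_min zero_le_one (by positivity)
  rcases le_or_gt ‖y‖ (‖x‖ / 2) with hy | hy
  · have hxy : ‖x‖ / 2 ≤ ‖x + y‖ := by linarith [norm_le_add_norm_add x y]
    calc ‖y‖ ^ p * min 1 (‖x + y‖ ^ p) ≤ (‖x‖ / 2) ^ p * ‖y‖ ^ p := by
          rw [mul_comm]
          gcongr
          exact (min_le_right _ _).trans (rpow_le_rpow_of_nonpos hx2 hxy hp)
      _ ≤ (‖x‖ / 2) ^ p * (‖y‖ ^ p + min 1 (‖x + y‖ ^ p)) := by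
          gcongr
          exact le_add_of_nonneg_right hxy0
  · calc ‖y‖ ^ p * min 1 (‖x + y‖ ^ p) ≤ (‖x‖ / 2) ^ p * min 1 (‖x + y‖ ^ p) :=
          mul_le_mul_of_nonneg_right (rpow_le_rpow_of_nonpos hx2 hy.le hp) hxy0
      _ ≤ (‖x‖ / 2) ^ p * (‖y‖ ^ p + min 1 (‖x + y‖ ^ p)) := by
          gcongr
          exact le_add_of_nonneg_left (by positivity)

variable [MeasurableSpace E] [BorelSpace E] {μ : Measure E} {s : Set E}

lemma integrableOn_norm_rpow_mul_min_one (h : IntegrableOn (fun y : E => ‖y‖ ^ p) s μ) (x : E) :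
    IntegrableOn (fun y => ‖y‖ ^ p * min 1 (‖x + y‖ ^ p)) s μ := by
  refine h.mono' (by fun_prop) (ae_of_all _ fun y => ?_)
  rw [norm_of_nonneg (by positivity)]
  exact mul_le_of_le_one_right (by positivity) (min_le_left _ _)

lemma setIntegral_norm_rpow_mul_min_one_le_setIntegral
    (h : IntegrableOn (fun y : E => ‖y‖ ^ p) s μ) (x : E) :
    ∫ y in s, ‖y‖ ^ p * min 1 (‖x + y‖ ^ p) ∂μ ≤ ∫ y in s, ‖y‖ ^ p ∂μ :=
  setIntegral_mono (integrableOn_norm_rpow_mul_min_one h x) h fun _ =>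
    mul_le_of_le_one_right (by positivity) (min_le_left _ _)

variable [NormedSpace ℝ E] [FiniteDimensional ℝ E] [μ.IsAddHaarMeasure]

lemma integrable_min_one_norm_rpow (hp : p < -Module.finrank ℝ E) :
    Integrable (fun z : E => min 1 (‖z‖ ^ p)) μ := by
  have hdom : Integrable (fun z : E => (1 + ‖z‖) ^ p / 2 ^ p) μ := by
    simpa only [neg_neg] using
      (integrable_one_add_norm (μ := μ) (r := -p) (by linarith)).div_const (2 ^ p)
  refine hdom.mono' (measurable_const.min (measurable_norm.pow_const p)).aestronglyMeasurable
    (ae_of_all _ fun z => ?_)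
  rw [norm_of_nonneg (le_min zero_le_one (by positivity)), ← div_rpow (by positivity) zero_le_two]
  exact min_one_rpow_le_rpow_one_add_div_two (norm_nonneg z) (hp.le.trans (by simp))

lemma integrableOn_norm_rpow_one_lt_norm (hp : p < -Module.finrank ℝ E) :
    IntegrableOn (fun y : E => ‖y‖ ^ p) {y | 1 < ‖y‖} μ :=
  (integrable_min_one_norm_rpow hp).integrableOn.congr_fun (fun _ hy =>
      min_eq_right (rpow_le_one_of_one_le_of_nonpos hy.le (hp.le.trans (by simp))))
    (measurableSet_lt measurable_const measurable_norm)

lemma setIntegral_norm_rpow_mul_min_one_le_rpow (hp : p < -Module.finrank ℝ E)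
    (h : IntegrableOn (fun y : E => ‖y‖ ^ p) s μ) {x : E} (hx : x ≠ 0) :
    ∫ y in s, ‖y‖ ^ p * min 1 (‖x + y‖ ^ p) ∂μ ≤
      (‖x‖ / 2) ^ p * ((∫ y in s, ‖y‖ ^ p ∂μ) + ∫ z, min 1 (‖z‖ ^ p) ∂μ) := by
  have hgx : Integrable (fun y => min 1 (‖x + y‖ ^ p)) μ :=
    (integrable_min_one_norm_rpow hp).comp_add_left x
  calc ∫ y in s, ‖y‖ ^ p * min 1 (‖x + y‖ ^ p) ∂μ
      ≤ ∫ y in s, (‖x‖ / 2) ^ p * (‖y‖ ^ p + min 1 (‖x + y‖ ^ p)) ∂μ :=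
        setIntegral_mono (integrableOn_norm_rpow_mul_min_one h x)
          ((h.add hgx.integrableOn).const_mul _)
          (norm_rpow_mul_min_one_le (hp.le.trans (by simp)) hx)
    _ = (‖x‖ / 2) ^ p * ((∫ y in s, ‖y‖ ^ p ∂μ) + ∫ y in s, min 1 (‖x + y‖ ^ p) ∂μ) := by
        rw [integral_const_mul, integral_add h hgx.integrableOn]
    _ ≤ (‖x‖ / 2) ^ p * ((∫ y in s, ‖y‖ ^ p ∂μ) + ∫ y, min 1 (‖x + y‖ ^ p) ∂μ) := by
        have hle := setIntegral_le_integral (s := s) hgx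
          (ae_of_all _ fun _ => le_min zero_le_one (by positivity))
        gcongr
    _ = (‖x‖ / 2) ^ p * ((∫ y in s, ‖y‖ ^ p ∂μ) + ∫ z, min 1 (‖z‖ ^ p) ∂μ) := by
        rw [integral_add_left_eq_self (fun z => min 1 (‖z‖ ^ p)) x]

end Normed

lemma setIntegral_mul_minPow_add_eq (H x : ℝ) (f : ℝ → ℝ) (s : Set ℝ) :
    ∫ y in s, f y * minPow H (x + y) = ∫ y in s, f y * min 1 (|x + y| ^ (2 * H - 2)) := by
  refine integral_congr_ae ?_
  filter_upwards [ae_restrict_of_ae ((Set.countable_singleton (-x)).ae_notMem volume)] with y hy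
  rw [minPow, if_neg fun h => hy (eq_neg_of_add_eq_zero_right h)]

theorem integral_abs_rpow_min_le (H : ℝ) (hH : H ∈ Set.Ioo (0:ℝ) (1/2)) :
    ∃ c : ℝ, 0 < c ∧ ∀ x : ℝ,
      (∫ y in {y : ℝ | 1 < |y|}, |y| ^ (2 * H - 2) * minPow H (x + y)) ≤
        c * minPow H x := by
  set p := 2 * H - 2 with hp_def
  have hp : p < -Module.finrank ℝ ℝ := by
    rw [Module.finrank_self, Nat.cast_one, hp_def]; linarith [hH.2]
  have hS : IntegrableOn (fun y : ℝ => ‖y‖ ^ p) {y | 1 < ‖y‖} :=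
    integrableOn_norm_rpow_one_lt_norm hp
  set C₀ := ∫ y in {y : ℝ | 1 < |y|}, |y| ^ p
  set C₁ := ∫ z : ℝ, min 1 (|z| ^ p)
  have hC₀ : 0 ≤ C₀ := setIntegral_nonneg_of_ae_restrict (ae_of_all _ fun _ => by positivity)
  have hC₁ : 0 ≤ C₁ := integral_nonneg fun _ => le_min zero_le_one (by positivity)
  have hB : 0 ≤ (C₀ + C₁) / 2 ^ p := by positivity
  refine ⟨C₀ + (C₀ + C₁) / 2 ^ p + 1, by positivity, fun x => ?_⟩
  have h_le_C₀ := setIntegral_norm_rpow_mul_min_one_le_setIntegral hS x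
  simp only [Real.norm_eq_abs] at h_le_C₀
  rw [setIntegral_mul_minPow_add_eq, ← hp_def]
  rcases eq_or_ne x 0 with rfl | hx
  · rw [minPow, if_pos rfl]
    linarith
  · have h_le_rpow := setIntegral_norm_rpow_mul_min_one_le_rpow hp hS hx
    simp only [Real.norm_eq_abs] at h_le_rpow
    rw [minPow, if_neg hx, ← hp_def, mul_min_of_nonneg _ _ (by positivity), mul_one]
    refine le_min (by linarith) (h_le_rpow.trans ?_)
    rw [div_rpow (abs_nonneg x) zero_le_two, div_mul_eq_mul_div, mul_div_assoc, mul_comm]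
    gcongr
    linarith
end

section
/- For every H ∈ (0, 1/2) there exists a constant c > 0 such that for all x > 2, ∫_1^∞ y^{2H-2} · min(1, |x - y|^{2H-2}) dy ≤ c · x^{2H-2}. -/
/-!
Write `a = 2H - 2 < -1`. For `y ≥ x/2` the factor `y ^ a` is at most `(x/2) ^ a`, and for
`y < x/2` the distance `|x - y|` is at least `x/2`, so the kernel `min 1 (|x - y| ^ a)` is at
most `(x/2) ^ a`. Hence the integrand is bounded by `(x/2) ^ a` times the sum of the two
factors, and both are integrable: `y ^ a` on `[1, ∞)`, and `min 1 (|t| ^ a)` on all of `ℝ`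
(translation invariance then removes the dependence on `x`).
-/

open MeasureTheory Real Set

lemma min_one_abs_rpow_nonneg (a t : ℝ) : 0 ≤ min 1 (|t| ^ a) :=
  le_min zero_le_one (rpow_nonneg (abs_nonneg t) a)

section

variable {a : ℝ}

lemma min_one_abs_rpow_le (ha : a ≤ 0) (t : ℝ) :
    min 1 (|t| ^ a) ≤ ((1 + |t|) / 2) ^ a := by
  rcases le_total |t| 1 with ht | ht
  · exact (min_le_left _ _).trans
      (one_le_rpow_of_pos_of_le_one_of_nonpos (by positivity) (by linarith) ha)
  · exact (min_le_right _ _).trans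
      (rpow_le_rpow_of_nonpos (by positivity) (by linarith) ha)

lemma integrable_min_one_abs_rpow (ha : a < -1) :
    Integrable (fun t : ℝ => min 1 (|t| ^ a)) := by
  have hdom : Integrable (fun t : ℝ => (2 : ℝ) ^ (-a) * (1 + ‖t‖) ^ (-(-a))) :=
    (integrable_one_add_norm (by rw [Module.finrank_self, Nat.cast_one]; linarith)).const_mul _
  refine hdom.mono' (Measurable.aestronglyMeasurable (by fun_prop))
    (Filter.Eventually.of_forall fun t => ?_)
  rw [norm_of_nonneg (min_one_abs_rpow_nonneg a t), neg_neg, norm_eq_abs, rpow_neg two_pos.le,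
    ← div_eq_inv_mul, ← div_rpow (by positivity) two_pos.le]
  exact min_one_abs_rpow_le (by linarith) t

lemma rpow_mul_min_one_abs_sub_rpow_le (ha : a ≤ 0) {x y : ℝ} (hx : 0 < x) (hy : 0 < y) :
    y ^ a * min 1 (|x - y| ^ a) ≤ (x / 2) ^ a * (y ^ a + min 1 (|x - y| ^ a)) := by
  have hm := min_one_abs_rpow_nonneg a (x - y)
  have hya : 0 ≤ y ^ a := rpow_nonneg hy.le a
  have hxa : 0 ≤ (x / 2) ^ a := rpow_nonneg (by positivity) a
  rcases le_total (x / 2) y with hxy | hyx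
  · calc y ^ a * min 1 (|x - y| ^ a) ≤ (x / 2) ^ a * min 1 (|x - y| ^ a) :=
          mul_le_mul_of_nonneg_right (rpow_le_rpow_of_nonpos (by positivity) hxy ha) hm
      _ ≤ _ := mul_le_mul_of_nonneg_left (le_add_of_nonneg_left hya) hxa
  · have hdist : x / 2 ≤ |x - y| := by rw [abs_of_nonneg (by linarith)]; linarith
    calc y ^ a * min 1 (|x - y| ^ a) ≤ (x / 2) ^ a * y ^ a := by
          rw [mul_comm ((x / 2) ^ a)]
          exact mul_le_mul_of_nonneg_left ((min_le_right _ _).trans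
            (rpow_le_rpow_of_nonpos (by positivity) hdist ha)) hya
      _ ≤ _ := mul_le_mul_of_nonneg_left (le_add_of_nonneg_right hm) hxa

lemma setIntegral_rpow_mul_min_one_abs_sub_rpow_le (ha : a < -1) {c x : ℝ} (hc : 0 < c)
    (hx : 0 < x) :
    ∫ y in Ici c, y ^ a * min 1 (|x - y| ^ a) ≤
      (x / 2) ^ a * ((∫ y in Ici c, y ^ a) + ∫ t, min 1 (|t| ^ a)) := by
  have hpow : IntegrableOn (fun y : ℝ => y ^ a) (Ici c) :=
    Iff.mpr integrableOn_Ici_iff_integrableOn_Ioi (integrableOn_Ioi_rpow_of_lt ha hc)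
  have hshift : Integrable (fun y : ℝ => min 1 (|x - y| ^ a)) :=
    (integrable_min_one_abs_rpow ha).comp_sub_left x
  have hprod : IntegrableOn (fun y : ℝ => y ^ a * min 1 (|x - y| ^ a)) (Ici c) := by
    refine hpow.mono' (by fun_prop) ?_
    filter_upwards [ae_restrict_mem measurableSet_Ici] with y (hy : c ≤ y)
    have hya : 0 ≤ y ^ a := rpow_nonneg (hc.trans_le hy).le a
    rw [norm_of_nonneg (mul_nonneg hya (min_one_abs_rpow_nonneg a _))]
    exact mul_le_of_le_one_right hya (min_le_left _ _)
  have hshift_le : ∫ y in Ici c, min 1 (|x - y| ^ a) ≤ ∫ t, min 1 (|t| ^ a) := by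
    calc ∫ y in Ici c, min 1 (|x - y| ^ a) ≤ ∫ y, min 1 (|x - y| ^ a) :=
          setIntegral_le_integral hshift
            (Filter.Eventually.of_forall fun y => min_one_abs_rpow_nonneg a _)
      _ = ∫ t, min 1 (|t| ^ a) := by
          simp_rw [abs_sub_comm x]
          exact integral_sub_right_eq_self (fun t : ℝ => min 1 (|t| ^ a)) x
  calc ∫ y in Ici c, y ^ a * min 1 (|x - y| ^ a)
      ≤ ∫ y in Ici c, (x / 2) ^ a * (y ^ a + min 1 (|x - y| ^ a)) :=
        setIntegral_mono_on hprod ((hpow.add hshift.integrableOn).const_mul _) measurableSet_Ici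
          fun y (hy : c ≤ y) => rpow_mul_min_one_abs_sub_rpow_le (by linarith) hx (hc.trans_le hy)
    _ = (x / 2) ^ a * ((∫ y in Ici c, y ^ a) + ∫ y in Ici c, min 1 (|x - y| ^ a)) := by
        rw [integral_const_mul, integral_add hpow hshift.integrableOn]
    _ ≤ _ := mul_le_mul_of_nonneg_left (add_le_add_right hshift_le _)
        (rpow_nonneg (by positivity) a)

end

theorem integral_rpow_min_le_of_two_lt (H : ℝ) (hH : H ∈ Set.Ioo (0:ℝ) (1/2)) :
    ∃ c : ℝ, 0 < c ∧ ∀ x : ℝ, 2 < x →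
      (∫ y in Set.Ici (1:ℝ), y ^ (2 * H - 2) * min 1 (|x - y| ^ (2 * H - 2))) ≤
        c * x ^ (2 * H - 2) := by
  set a := 2 * H - 2
  have ha : a < -1 := by linarith [hH.2]
  set C := (∫ y in Ici (1:ℝ), y ^ a) + ∫ t, min 1 (|t| ^ a)
  refine ⟨max 1 (C / 2 ^ a), one_pos.trans_le (le_max_left _ _), fun x hx => ?_⟩
  have hx0 : 0 < x := by linarith
  calc ∫ y in Ici (1:ℝ), y ^ a * min 1 (|x - y| ^ a)
      ≤ (x / 2) ^ a * C := setIntegral_rpow_mul_min_one_abs_sub_rpow_le ha one_pos hx0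
    _ = C / 2 ^ a * x ^ a := by rw [div_rpow hx0.le two_pos.le]; ring
    _ ≤ max 1 (C / 2 ^ a) * x ^ a :=
        mul_le_mul_of_nonneg_right (le_max_right _ _) (rpow_nonneg hx0.le a)
end

section
/- Let α ∈ (1,2) and let G_α(t,x) = t^{-1/α} G(t^{-1/α} x) for t > 0, where G : ℝ → ℝ is a probability density satisfying c₁(1+|z|)^{-1-α} ≤ G(z) ≤ c₂(1+|z|)^{-1-α}. Let λ(x) = c(1+|x|²)^{-λ₀} with λ₀ ∈ (-α/2, α/2), normalized so that ∫λ = 1. Then for every T > 0, sup_{0≤t≤T} sup_{x∈ℝ} (1/λ(x)) ∫_ℝ G_α(t, x-y) λ(y) dy < ∞. -/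
open MeasureTheory Real

/-!
Substituting `y = x - t^{1/α} z` turns the integral into `∫ G z λ(x - t^{1/α} z) dz`. By Peetre's
inequality `λ(x - s z) ≤ C_T (1 + |z|)^{2|λ₀|} λ(x)` uniformly in `0 < s ≤ T^{1/α}`, so the integral is
at most `c₂ C_T λ(x) ∫ (1 + |z|)^{-1-α+2|λ₀|} dz`, which is finite because `2|λ₀| < α`.
-/

lemma rpow_le_rpow_abs_mul_rpow_of_le_mul {u v b : ℝ} (hu : 0 < u) (hv : 0 < v)
    (huv : u ≤ b * v) (hvu : v ≤ b * u) (r : ℝ) : u ^ r ≤ b ^ |r| * v ^ r := by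
  have hb : 0 < b := pos_of_mul_pos_left (hu.trans_le huv) hv.le
  have hb1 : 1 ≤ b := by nlinarith [mul_pos hu hv]
  rcases le_or_gt 0 r with hr | hr
  · calc u ^ r ≤ (b * v) ^ r := rpow_le_rpow hu.le huv hr
      _ = b ^ r * v ^ r := mul_rpow hb.le hv.le
      _ = b ^ |r| * v ^ r := by rw [abs_of_nonneg hr]
  · have h : b ^ r * u ^ r ≤ v ^ r := by
      rw [← mul_rpow hb.le hu.le]
      exact rpow_le_rpow_of_nonpos hv hvu hr.le
    calc u ^ r = b ^ (-r) * (b ^ r * u ^ r) := by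
          rw [← mul_assoc, ← rpow_add hb, neg_add_cancel, rpow_zero, one_mul]
      _ ≤ b ^ |r| * v ^ r := by
          rw [abs_of_neg hr]
          exact mul_le_mul_of_nonneg_left h (rpow_nonneg hb.le _)

lemma one_add_sq_le_two_mul_sq_mul (x y : ℝ) :
    1 + |y| ^ 2 ≤ 2 * (1 + |x - y|) ^ 2 * (1 + |x| ^ 2) := by
  have hy : |y| ≤ |x| + |x - y| := by
    linarith [abs_sub_abs_le_abs_sub y x, abs_sub_comm y x]
  have := abs_nonneg (x - y)
  nlinarith [pow_le_pow_left₀ (abs_nonneg y) hy 2, sq_nonneg (|x| - |x - y|),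
    mul_nonneg (sq_nonneg |x|) (sq_nonneg |x - y|), abs_nonneg x]

/-- Peetre's inequality. -/
lemma one_add_sq_rpow_le (r x y : ℝ) :
    (1 + |y| ^ 2) ^ r ≤ (2 * (1 + |x - y|) ^ 2) ^ |r| * (1 + |x| ^ 2) ^ r := by
  refine rpow_le_rpow_abs_mul_rpow_of_le_mul (by positivity) (by positivity)
    (one_add_sq_le_two_mul_sq_mul x y) ?_ r
  simpa [abs_sub_comm] using one_add_sq_le_two_mul_sq_mul y x

lemma one_add_sq_rpow_sub_mul_le (r x z : ℝ) {s S : ℝ} (hs : 0 ≤ s) (hsS : s ≤ S) :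
    (1 + |x - s * z| ^ 2) ^ r ≤
      (2 * (1 + S) ^ 2) ^ |r| * (1 + |z|) ^ (2 * |r|) * (1 + |x| ^ 2) ^ r := by
  have hS : 0 ≤ S := hs.trans hsS
  have hdist : 1 + |x - (x - s * z)| ≤ (1 + S) * (1 + |z|) := by
    rw [sub_sub_cancel, abs_mul, abs_of_nonneg hs]
    nlinarith [mul_le_mul_of_nonneg_right hsS (abs_nonneg z), abs_nonneg z]
  have hpow : (2 * (1 + |x - (x - s * z)|) ^ 2) ^ |r| ≤
      (2 * (1 + S) ^ 2) ^ |r| * (1 + |z|) ^ (2 * |r|) := by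
    calc (2 * (1 + |x - (x - s * z)|) ^ 2) ^ |r|
        ≤ (2 * (1 + S) ^ 2 * (1 + |z|) ^ 2) ^ |r| := by
          rw [mul_assoc, ← mul_pow]
          gcongr
      _ = (2 * (1 + S) ^ 2) ^ |r| * (1 + |z|) ^ (2 * |r|) := by
          rw [mul_rpow (by positivity) (by positivity), ← rpow_natCast_mul (by positivity)]
          norm_num
  calc (1 + |x - s * z| ^ 2) ^ r
      ≤ (2 * (1 + |x - (x - s * z)|) ^ 2) ^ |r| * (1 + |x| ^ 2) ^ r := one_add_sq_rpow_le r x _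
    _ ≤ _ := by gcongr

lemma integrable_one_add_abs_rpow {p : ℝ} (hp : p < -1) :
    Integrable fun v : ℝ => (1 + |v|) ^ p := by
  have := integrable_one_add_norm (E := ℝ) (μ := volume) (r := -p)
    (by rw [Module.finrank_self, Nat.cast_one]; linarith)
  simpa only [neg_neg, Real.norm_eq_abs] using this

lemma integral_inv_mul_comp_inv_mul_sub (g : ℝ → ℝ) {s : ℝ} (hs : 0 < s) (x : ℝ) :
    ∫ y, s⁻¹ * g (s⁻¹ * (x - y)) = ∫ z, g z := by
  rw [integral_const_mul, integral_sub_left_eq_self (fun y => g (s⁻¹ * y)),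
    Measure.integral_comp_mul_left, inv_inv, abs_of_pos hs, smul_eq_mul,
    inv_mul_cancel_left₀ hs.ne']

lemma integral_rescaled_kernel_mul (K w : ℝ → ℝ) {s : ℝ} (hs : 0 < s) (x : ℝ) :
    ∫ y, s⁻¹ * K (s⁻¹ * (x - y)) * w y = ∫ z, K z * w (x - s * z) := by
  rw [← integral_inv_mul_comp_inv_mul_sub (fun z => K z * w (x - s * z)) hs x]
  congr with y
  rw [mul_inv_cancel_left₀ hs.ne', sub_sub_cancel, mul_assoc]

theorem weighted_heat_kernel_bound_general (α c₁ c₂ lam₀ c T : ℝ) (G : ℝ → ℝ)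
    (hc₁ : 0 < c₁)
    (hGbound : ∀ z : ℝ, c₁ * (1 + |z|) ^ (-1 - α) ≤ G z ∧ G z ≤ c₂ * (1 + |z|) ^ (-1 - α))
    (hlam₀ : lam₀ ∈ Set.Ioo (-(α / 2)) (α / 2)) (hc : 0 < c) :
    ∃ M : ℝ, ∀ t ∈ Set.Ioc (0:ℝ) T, ∀ x : ℝ,
      (1 / (c * (1 + |x| ^ 2) ^ (-lam₀))) *
        (∫ y : ℝ, (t ^ (-(1/α)) * G (t ^ (-(1/α)) * (x - y))) *
          (c * (1 + |y| ^ 2) ^ (-lam₀))) ≤ M := by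
  obtain ⟨hl₁, hl₂⟩ := hlam₀
  have hp : -1 - α + 2 * |lam₀| < -1 := by cases abs_cases lam₀ <;> linarith
  set w : ℝ → ℝ := fun y => c * (1 + |y| ^ 2) ^ (-lam₀)
  set φ : ℝ → ℝ := fun z => (1 + |z|) ^ (-1 - α + 2 * |lam₀|)
  set K := (2 * (1 + T ^ (1 / α)) ^ 2) ^ |lam₀|
  refine ⟨c₂ * K * ∫ z, φ z, ?_⟩
  rintro t ⟨ht, htT⟩ x
  set s := t ^ (1 / α)
  have hs : 0 < s := rpow_pos_of_pos ht _
  have hsT : s ≤ T ^ (1 / α) := rpow_le_rpow ht.le htT (by rw [one_div_nonneg]; linarith)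
  have hG0 (z : ℝ) : 0 ≤ G z := le_trans (by positivity) (hGbound z).1
  have hweight (z : ℝ) : w (x - s * z) ≤ K * (1 + |z|) ^ (2 * |lam₀|) * w x := by
    have := one_add_sq_rpow_sub_mul_le (-lam₀) x z hs.le hsT
    rw [abs_neg] at this
    calc w (x - s * z) ≤ c * (K * (1 + |z|) ^ (2 * |lam₀|) * (1 + |x| ^ 2) ^ (-lam₀)) :=
          mul_le_mul_of_nonneg_left this hc.le
      _ = K * (1 + |z|) ^ (2 * |lam₀|) * w x := by ring
  have hpointwise (z : ℝ) : G z * w (x - s * z) ≤ c₂ * K * w x * φ z :=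
    calc G z * w (x - s * z)
        ≤ c₂ * (1 + |z|) ^ (-1 - α) * (K * (1 + |z|) ^ (2 * |lam₀|) * w x) :=
          mul_le_mul (hGbound z).2 (hweight z) (by positivity) ((hG0 z).trans (hGbound z).2)
      _ = c₂ * K * w x * φ z := by simp only [φ]; rw [rpow_add (by positivity)]; ring
  have hintegral : ∫ y, t ^ (-(1 / α)) * G (t ^ (-(1 / α)) * (x - y)) * w y ≤
      c₂ * K * w x * ∫ z, φ z := by
    rw [rpow_neg ht.le, integral_rescaled_kernel_mul G w hs, ← integral_const_mul]
    exact integral_mono_of_nonneg (ae_of_all _ fun z => mul_nonneg (hG0 z) (by positivity))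
      ((integrable_one_add_abs_rpow hp).const_mul _) (ae_of_all _ hpointwise)
  have hwx : 0 < w x := by positivity
  calc 1 / w x * ∫ y, t ^ (-(1 / α)) * G (t ^ (-(1 / α)) * (x - y)) * w y
      ≤ 1 / w x * (c₂ * K * w x * ∫ z, φ z) := by gcongr
    _ = c₂ * K * ∫ z, φ z := by field_simp

theorem weighted_heat_kernel_bound (α c₁ c₂ lam₀ c T : ℝ) (G : ℝ → ℝ)
    (hα : α ∈ Set.Ioo (1:ℝ) 2) (hc₁ : 0 < c₁) (hc₁₂ : c₁ ≤ c₂)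
    (hGbound : ∀ z : ℝ, c₁ * (1 + |z|) ^ (-1 - α) ≤ G z ∧ G z ≤ c₂ * (1 + |z|) ^ (-1 - α))
    (hGprob : ∫ z : ℝ, G z = 1)
    (hlam₀ : lam₀ ∈ Set.Ioo (-(α / 2)) (α / 2)) (hc : 0 < c)
    (hnorm : ∫ x : ℝ, c * (1 + |x| ^ 2) ^ (-lam₀) = 1)
    (hT : 0 < T) :
    ∃ M : ℝ, ∀ t ∈ Set.Ioc (0:ℝ) T, ∀ x : ℝ,
      (1 / (c * (1 + |x| ^ 2) ^ (-lam₀))) *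
        (∫ y : ℝ, (t ^ (-(1/α)) * G (t ^ (-(1/α)) * (x - y))) *
          (c * (1 + |y| ^ 2) ^ (-lam₀))) ≤ M :=
  weighted_heat_kernel_bound_general α c₁ c₂ lam₀ c T G hc₁ hGbound hlam₀ hc
end

section
/- Let α ∈ (1,2), q ≥ 1, λ₀ ∈ (-((1+α)q-1)/2, ((1+α)q-1)/2), and λ(x) = c(1+|x|²)^{-λ₀}. Let G_α(t,x) = t^{-1/α} G(t^{-1/α}x) with G as above. Then for all t ∈ (0,T], sup_{x∈ℝ} (1/λ(x)) ∫_ℝ G_α(t,x-y)^q λ(y) dy ≤ C t^{-(q-1)/α} for a constant C depending on λ₀, q, α, T. -/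
open MeasureTheory Real

/-!
Substituting `y = x - t^{1/α} z` turns the integral into `t^{(1-q)/α}` times
`∫ G(z)^q λ(x - t^{1/α} z) dz`. Peetre's inequality
`(1 + |y|²)^s ≤ 2^|s| (1 + |x - y|)^{2|s|} (1 + |x|²)^s` bounds
`λ(x - t^{1/α} z) / λ(x)` by `2^|λ₀| (1 + T^{1/α})^{2|λ₀|} (1 + |z|)^{2|λ₀|}`, uniformly in `x`
and `t ≤ T`, and the resulting majorant `(1 + |z|)^{2|λ₀| - (1 + α) q}` of the integrand is
integrable exactly because `|λ₀| < ((1 + α) q - 1) / 2`.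
-/

lemma one_add_norm_sq_le {E : Type*} [SeminormedAddCommGroup E] (x y : E) :
    1 + ‖y‖ ^ 2 ≤ 2 * (1 + ‖x - y‖) ^ 2 * (1 + ‖x‖ ^ 2) := by
  have hy : ‖y‖ ≤ ‖x‖ + ‖x - y‖ := by simpa using norm_sub_le x (x - y)
  nlinarith [norm_nonneg x, norm_nonneg (x - y), norm_nonneg y, sq_nonneg (‖x‖ - ‖x - y‖),
    sq_nonneg (‖x‖ * ‖x - y‖)]

lemma rpow_le_rpow_abs_mul_rpow {a b w : ℝ} (ha : 0 < a) (hb : 0 < b) (hba : b ≤ w * a)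
    (hab : a ≤ w * b) (s : ℝ) : b ^ s ≤ w ^ |s| * a ^ s := by
  have hw : 0 < w := pos_of_mul_pos_left (hb.trans_le hba) ha.le
  rcases le_total 0 s with hs | hs
  · rw [abs_of_nonneg hs, ← mul_rpow hw.le ha.le]
    exact rpow_le_rpow hb.le hba hs
  · have hab' : a / w ≤ b := (div_le_iff₀' hw).2 hab
    calc b ^ s ≤ (a / w) ^ s := rpow_le_rpow_of_nonpos (by positivity) hab' hs
      _ = w ^ |s| * a ^ s := by
        rw [div_rpow ha.le hw.le, abs_of_nonpos hs, rpow_neg hw.le, div_eq_mul_inv, mul_comm]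

lemma one_add_norm_sq_rpow_le {E : Type*} [SeminormedAddCommGroup E] (x y : E) (s : ℝ) :
    (1 + ‖y‖ ^ 2) ^ s ≤ 2 ^ |s| * (1 + ‖x - y‖) ^ (2 * |s|) * (1 + ‖x‖ ^ 2) ^ s := by
  have hsq : (2 * (1 + ‖x - y‖) ^ 2) ^ |s| = 2 ^ |s| * (1 + ‖x - y‖) ^ (2 * |s|) := by
    rw [mul_rpow zero_le_two (by positivity), ← rpow_natCast _ 2, ← rpow_mul (by positivity)]
    norm_num
  rw [← hsq]
  refine rpow_le_rpow_abs_mul_rpow (by positivity) (by positivity) (one_add_norm_sq_le x y) ?_ s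
  simpa [norm_sub_rev] using one_add_norm_sq_le y x

lemma one_add_norm_sq_rpow_sub_smul_le {E : Type*} [SeminormedAddCommGroup E]
    [NormedSpace ℝ E] (x z : E) (s : ℝ) {ε A : ℝ} (hε : 0 ≤ ε) (hεA : ε ≤ A) :
    (1 + ‖x - ε • z‖ ^ 2) ^ s ≤
      2 ^ |s| * (1 + A) ^ (2 * |s|) * (1 + ‖z‖) ^ (2 * |s|) * (1 + ‖x‖ ^ 2) ^ s := by
  have hstretch : 1 + ‖ε • z‖ ≤ (1 + A) * (1 + ‖z‖) := by
    rw [norm_smul, Real.norm_of_nonneg hε]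
    nlinarith [norm_nonneg z]
  calc (1 + ‖x - ε • z‖ ^ 2) ^ s
      ≤ 2 ^ |s| * (1 + ‖ε • z‖) ^ (2 * |s|) * (1 + ‖x‖ ^ 2) ^ s := by
        simpa using one_add_norm_sq_rpow_le x (x - ε • z) s
    _ ≤ 2 ^ |s| * ((1 + A) * (1 + ‖z‖)) ^ (2 * |s|) * (1 + ‖x‖ ^ 2) ^ s := by
        gcongr
    _ = 2 ^ |s| * (1 + A) ^ (2 * |s|) * (1 + ‖z‖) ^ (2 * |s|) * (1 + ‖x‖ ^ 2) ^ s := by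
        rw [mul_rpow (by linarith) (by positivity)]
        ring

lemma integrable_one_add_abs_rpow_s14 {r : ℝ} (hr : r < -1) :
    Integrable (fun z : ℝ => (1 + |z|) ^ r) := by
  simpa using integrable_one_add_norm (E := ℝ) (μ := volume) (r := -r) (by simp; linarith)

lemma integral_comp_mul_sub {E : Type*} [NormedAddCommGroup E] [NormedSpace ℝ E]
    (F : ℝ → ℝ → E) (s x : ℝ) (hs : s ≠ 0) :
    ∫ y, F (s * (x - y)) y = |s⁻¹| • ∫ z, F z (x - s⁻¹ * z) := by
  rw [← Measure.integral_comp_mul_left, ← integral_sub_left_eq_self _ volume x]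
  simp [hs]

lemma integral_rpow_mul_weight_le {G : ℝ → ℝ} {q β c₂ ε A : ℝ} (x w : ℝ) (hq : 0 ≤ q)
    (hr : 2 * |w| - β * q < -1) (hG0 : ∀ z, 0 ≤ G z) (hG : ∀ z, G z ≤ c₂ * (1 + |z|) ^ (-β))
    (hε : 0 ≤ ε) (hεA : ε ≤ A) :
    ∫ z, G z ^ q * (1 + |x - ε * z| ^ 2) ^ w ≤
      c₂ ^ q * 2 ^ |w| * (1 + A) ^ (2 * |w|) * (1 + |x| ^ 2) ^ w *
        ∫ z, (1 + |z|) ^ (2 * |w| - β * q) := by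
  have hc₂ : 0 ≤ c₂ := by simpa using (hG0 0).trans (hG 0)
  have hpoint : ∀ z, G z ^ q * (1 + |x - ε * z| ^ 2) ^ w ≤
      c₂ ^ q * 2 ^ |w| * (1 + A) ^ (2 * |w|) * (1 + |x| ^ 2) ^ w *
        (1 + |z|) ^ (2 * |w| - β * q) := by
    intro z
    have hkernel : G z ^ q ≤ c₂ ^ q * (1 + |z|) ^ (-β * q) := by
      calc G z ^ q ≤ (c₂ * (1 + |z|) ^ (-β)) ^ q := rpow_le_rpow (hG0 z) (hG z) hq
        _ = c₂ ^ q * (1 + |z|) ^ (-β * q) := by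
          rw [mul_rpow hc₂ (by positivity), ← rpow_mul (by positivity)]
    have hweight : (1 + |x - ε * z| ^ 2) ^ w ≤
        2 ^ |w| * (1 + A) ^ (2 * |w|) * (1 + |z|) ^ (2 * |w|) * (1 + |x| ^ 2) ^ w := by
      simpa using one_add_norm_sq_rpow_sub_smul_le x z w hε hεA
    calc G z ^ q * (1 + |x - ε * z| ^ 2) ^ w
        ≤ c₂ ^ q * (1 + |z|) ^ (-β * q) *
            (2 ^ |w| * (1 + A) ^ (2 * |w|) * (1 + |z|) ^ (2 * |w|) * (1 + |x| ^ 2) ^ w) := by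
          gcongr
      _ = _ := by
          rw [sub_eq_add_neg, rpow_add (by positivity), neg_mul]
          ring
  calc ∫ z, G z ^ q * (1 + |x - ε * z| ^ 2) ^ w
      ≤ ∫ z, c₂ ^ q * 2 ^ |w| * (1 + A) ^ (2 * |w|) * (1 + |x| ^ 2) ^ w *
          (1 + |z|) ^ (2 * |w| - β * q) :=
        integral_mono_of_nonneg (.of_forall fun z => by have := hG0 z; positivity)
          ((integrable_one_add_abs_rpow_s14 hr).const_mul _) (.of_forall hpoint)
    _ = _ := integral_const_mul _ _

lemma one_div_mul_integral_mul_const_mul_le {X : Type*} [MeasurableSpace X] {μ : Measure X}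
    {f g : X → ℝ} {a : ℝ} (c : ℝ) (ha : 0 < a) (hfg : ∀ y, 0 ≤ f y * g y) :
    1 / (c * a) * ∫ y, f y * (c * g y) ∂μ ≤ 1 / a * ∫ y, f y * g y ∂μ := by
  have hJ : 0 ≤ ∫ y, f y * g y ∂μ := integral_nonneg hfg
  simp_rw [mul_left_comm (f _) c]
  rw [integral_const_mul]
  rcases eq_or_ne c 0 with rfl | hc
  · simp only [zero_mul, div_zero, mul_zero]
    positivity
  · exact le_of_eq (by field_simp)

lemma one_div_weight_mul_integral_scaled_kernel_le {G : ℝ → ℝ} {q β c₂ s A : ℝ} (c x w : ℝ)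
    (hq : 0 ≤ q) (hr : 2 * |w| - β * q < -1) (hG0 : ∀ z, 0 ≤ G z)
    (hG : ∀ z, G z ≤ c₂ * (1 + |z|) ^ (-β)) (hs : 0 < s) (hsA : s⁻¹ ≤ A) :
    1 / (c * (1 + |x| ^ 2) ^ w) * ∫ y, (s * G (s * (x - y))) ^ q * (c * (1 + |y| ^ 2) ^ w) ≤
      s⁻¹ * s ^ q * (c₂ ^ q * 2 ^ |w| * (1 + A) ^ (2 * |w|) *
        ∫ z, (1 + |z|) ^ (2 * |w| - β * q)) := by
  have ha : 0 < (1 + |x| ^ 2) ^ w := by positivity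
  calc 1 / (c * (1 + |x| ^ 2) ^ w) * ∫ y, (s * G (s * (x - y))) ^ q * (c * (1 + |y| ^ 2) ^ w)
      ≤ 1 / (1 + |x| ^ 2) ^ w * ∫ y, (s * G (s * (x - y))) ^ q * (1 + |y| ^ 2) ^ w :=
        one_div_mul_integral_mul_const_mul_le c ha fun y => by
          have := hG0 (s * (x - y)); positivity
    _ = 1 / (1 + |x| ^ 2) ^ w *
          (s⁻¹ * s ^ q * ∫ z, G z ^ q * (1 + |x - s⁻¹ * z| ^ 2) ^ w) := by
        rw [integral_comp_mul_sub (fun z y => (s * G z) ^ q * (1 + |y| ^ 2) ^ w) s x hs.ne',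
          abs_of_pos (inv_pos.2 hs), smul_eq_mul]
        simp_rw [mul_rpow hs.le (hG0 _), mul_assoc, integral_const_mul]
    _ ≤ 1 / (1 + |x| ^ 2) ^ w * (s⁻¹ * s ^ q * (c₂ ^ q * 2 ^ |w| * (1 + A) ^ (2 * |w|) *
          (1 + |x| ^ 2) ^ w * ∫ z, (1 + |z|) ^ (2 * |w| - β * q))) := by
        gcongr
        exact integral_rpow_mul_weight_le x w hq hr hG0 hG (inv_pos.2 hs).le hsA
    _ = _ := by field_simp

theorem weighted_heat_kernel_Lq_bound_general (α q lam₀ c c₁ c₂ T : ℝ) (G : ℝ → ℝ)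
    (hα : α ∈ Set.Ioo (1:ℝ) 2)
    (hlam₀ : lam₀ ∈ Set.Ioo (-(((1 + α) * q - 1) / 2)) (((1 + α) * q - 1) / 2))
    (hc₁ : 0 < c₁)
    (hGbound : ∀ z : ℝ, c₁ * (1 + |z|) ^ (-1 - α) ≤ G z ∧ G z ≤ c₂ * (1 + |z|) ^ (-1 - α)) :
    ∃ C : ℝ, 0 < C ∧ ∀ t ∈ Set.Ioc (0:ℝ) T, ∀ x : ℝ,
      (1 / (c * (1 + |x| ^ 2) ^ (-lam₀))) *
        (∫ y : ℝ, (t ^ (-(1/α)) * G (t ^ (-(1/α)) * (x - y))) ^ q *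
          (c * (1 + |y| ^ 2) ^ (-lam₀))) ≤ C * t ^ (-((q - 1) / α)) := by
  have hα0 : 0 < α := by linarith [hα.1]
  have hr : 2 * |-lam₀| - (1 + α) * q < -1 := by linarith [abs_neg lam₀, abs_lt.2 hlam₀]
  -- the interval containing `lam₀` is nonempty, so `(1 + α) * q > 1`
  have hq : 0 ≤ q := by nlinarith [hlam₀.1, hlam₀.2]
  have hG0 : ∀ z, 0 ≤ G z := fun z => le_trans (by positivity) (hGbound z).1
  have hG : ∀ z, G z ≤ c₂ * (1 + |z|) ^ (-(1 + α)) := fun z => by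
    rw [neg_add']; exact (hGbound z).2
  set K := c₂ ^ q * 2 ^ |-lam₀| * (1 + T ^ (1 / α)) ^ (2 * |-lam₀|) *
    ∫ z : ℝ, (1 + |z|) ^ (2 * |-lam₀| - (1 + α) * q)
  refine ⟨max K 1, by positivity, fun t ⟨ht, htT⟩ x => ?_⟩
  have hs_inv : (t ^ (-(1 / α)))⁻¹ = t ^ (1 / α) := by rw [rpow_neg ht.le, inv_inv]
  have hscale : (t ^ (-(1 / α)))⁻¹ * (t ^ (-(1 / α))) ^ q = t ^ (-((q - 1) / α)) := by
    rw [hs_inv, ← rpow_mul ht.le, ← rpow_add ht]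
    ring_nf
  calc _ ≤ (t ^ (-(1 / α)))⁻¹ * (t ^ (-(1 / α))) ^ q * K :=
        one_div_weight_mul_integral_scaled_kernel_le c x (-lam₀) hq hr hG0 hG
          (rpow_pos_of_pos ht _) (hs_inv ▸ rpow_le_rpow ht.le htT (by positivity))
    _ ≤ max K 1 * t ^ (-((q - 1) / α)) := by
        rw [hscale, mul_comm]
        gcongr
        exact le_max_left _ _

theorem weighted_heat_kernel_Lq_bound (α q lam₀ c c₁ c₂ T : ℝ) (G : ℝ → ℝ)
    (hα : α ∈ Set.Ioo (1:ℝ) 2) (hq : 1 ≤ q)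
    (hlam₀ : lam₀ ∈ Set.Ioo (-(((1 + α) * q - 1) / 2)) (((1 + α) * q - 1) / 2))
    (hc : 0 < c) (hc₁ : 0 < c₁) (hc₁₂ : c₁ ≤ c₂)
    (hGbound : ∀ z : ℝ, c₁ * (1 + |z|) ^ (-1 - α) ≤ G z ∧ G z ≤ c₂ * (1 + |z|) ^ (-1 - α))
    (hT : 0 < T) :
    ∃ C : ℝ, 0 < C ∧ ∀ t ∈ Set.Ioc (0:ℝ) T, ∀ x : ℝ,
      (1 / (c * (1 + |x| ^ 2) ^ (-lam₀))) *
        (∫ y : ℝ, (t ^ (-(1/α)) * G (t ^ (-(1/α)) * (x - y))) ^ q *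
          (c * (1 + |y| ^ 2) ^ (-lam₀))) ≤ C * t ^ (-((q - 1) / α)) :=
  weighted_heat_kernel_Lq_bound_general α q lam₀ c c₁ c₂ T G hα hlam₀ hc₁ hGbound
end

section
/- Let H ∈ (0,1/2) and define R(x,z) = ((1+|z|)/(1+|x-z|))^{2-2H}. Then sup_{t∈[0,T]} sup_{z∈ℝ} ∫_ℝ min(1, |x|^{2H-2}) R(t^{1/α} x, z) dx < ∞ for any α ∈ (1,2) and T > 0. -/
open MeasureTheory Real

/-!
Write `β = 2 - 2H ∈ (1, 2)` and `s = t^{1/α}`. The factor `min 1 |x|^{-β}` is comparable to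
the integrable weight `(1 + |x|)^{-β}`. Where `2 s |x| ≤ 1 + |z|` the ratio
`(1 + |z|) / (1 + |s x - z|)` is at most `2`; elsewhere `|x|^{-β} (1 + |z|)^β ≤ (2s)^β`, which
trades the ratio for the weight at `s x - z`, whose integral is `s⁻¹ ∫ (1 + |u|)^{-β}`. Hence the
integral is at most `(4^β + 2^β s^{β-1}) ∫ (1 + |u|)^{-β}`, which is bounded for `s ≤ T^{1/α}`
because `β > 1`.
-/

lemma integrable_one_add_abs_rpow_neg {β : ℝ} (hβ : 1 < β) :
    Integrable fun u : ℝ => (1 + |u|) ^ (-β) := by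
  simpa [Real.norm_eq_abs] using integrable_one_add_norm (E := ℝ) (μ := volume) (r := β)
    (by simpa using hβ)

lemma integrable_rpow_mul_one_add_abs_mul_sub_rpow_neg {β s : ℝ} (hβ : 1 < β) (hs : 0 ≤ s)
    (z : ℝ) :
    Integrable fun x : ℝ => s ^ β * (1 + |s * x - z|) ^ (-β) := by
  rcases hs.eq_or_lt with rfl | hs
  · simp [Real.zero_rpow (by linarith : β ≠ 0)]
  · exact (((integrable_one_add_abs_rpow_neg hβ).comp_sub_right z).comp_mul_left'
      hs.ne').const_mul _

lemma integral_rpow_mul_one_add_abs_mul_sub_rpow_neg {β s : ℝ} (hβ : 1 < β) (hs : 0 ≤ s)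
    (z : ℝ) :
    ∫ x : ℝ, s ^ β * (1 + |s * x - z|) ^ (-β) = s ^ (β - 1) * ∫ u : ℝ, (1 + |u|) ^ (-β) := by
  rcases hs.eq_or_lt with rfl | hs
  · simp [Real.zero_rpow (by linarith : β ≠ 0), Real.zero_rpow (by linarith : β - 1 ≠ 0)]
  · have hpow : s ^ β * s⁻¹ = s ^ (β - 1) := by
      rw [Real.rpow_sub hs, Real.rpow_one, div_eq_mul_inv]
    rw [integral_const_mul, Measure.integral_comp_mul_left (fun u => (1 + |u - z|) ^ (-β)),
      integral_sub_right_eq_self (fun u => (1 + |u|) ^ (-β)) z, abs_of_pos (inv_pos.mpr hs),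
      smul_eq_mul, ← mul_assoc, hpow]

lemma min_one_abs_rpow_neg_le {β : ℝ} (hβ : 0 ≤ β) (x : ℝ) :
    min 1 (|x| ^ (-β)) ≤ 2 ^ β * (1 + |x|) ^ (-β) := by
  have h2 : (0 : ℝ) < 2 ^ β := by positivity
  rw [← div_le_iff₀' h2, div_eq_mul_inv, ← Real.rpow_neg zero_le_two]
  rcases le_total |x| 1 with hx | hx
  · calc min 1 (|x| ^ (-β)) * 2 ^ (-β) ≤ 1 * 2 ^ (-β) := by gcongr; exact min_le_left _ _
      _ ≤ (1 + |x|) ^ (-β) := by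
          rw [one_mul]
          exact Real.rpow_le_rpow_of_nonpos (by positivity) (by linarith) (by linarith)
  · calc min 1 (|x| ^ (-β)) * 2 ^ (-β) ≤ |x| ^ (-β) * 2 ^ (-β) := by gcongr; exact min_le_right _ _
      _ = (2 * |x|) ^ (-β) := by rw [Real.mul_rpow zero_le_two (abs_nonneg x), mul_comm]
      _ ≤ (1 + |x|) ^ (-β) :=
          Real.rpow_le_rpow_of_nonpos (by positivity) (by linarith) (by linarith)

lemma one_add_abs_le_two_mul_one_add_abs_sub {y z : ℝ} (h : 2 * |y| ≤ 1 + |z|) :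
    1 + |z| ≤ 2 * (1 + |y - z|) := by
  linarith [abs_sub_abs_le_abs_sub z y, abs_sub_comm z y]

lemma abs_rpow_neg_mul_rpow_le {β a b x : ℝ} (hβ : 0 ≤ β) (ha : 0 ≤ a) (h : a < b * |x|) :
    |x| ^ (-β) * a ^ β ≤ b ^ β := by
  have hx : 0 < |x| := by
    rcases (abs_nonneg x).eq_or_lt with hx | hx
    · rw [← hx, mul_zero] at h; linarith
    · exact hx
  calc |x| ^ (-β) * a ^ β = (a / |x|) ^ β := by
        rw [Real.rpow_neg hx.le, Real.div_rpow ha hx.le, inv_mul_eq_div]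
    _ ≤ b ^ β := Real.rpow_le_rpow (by positivity) ((div_le_iff₀ hx).2 h.le) hβ

lemma min_one_mul_weight_ratio_le {β s : ℝ} (hβ : 0 ≤ β) (hs : 0 ≤ s) (x z : ℝ) :
    min 1 (|x| ^ (-β)) * ((1 + |z|) / (1 + |s * x - z|)) ^ β ≤
      4 ^ β * (1 + |x|) ^ (-β) + 2 ^ β * (s ^ β * (1 + |s * x - z|) ^ (-β)) := by
  have hz : 0 < 1 + |z| := by positivity
  have hd : 0 < 1 + |s * x - z| := by positivity
  have hsx : |s * x| = s * |x| := by rw [abs_mul, abs_of_nonneg hs]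
  rcases le_or_gt (2 * (s * |x|)) (1 + |z|) with hnear | hfar
  · have hratio : (1 + |z|) / (1 + |s * x - z|) ≤ 2 := by
      rw [div_le_iff₀ hd]
      linarith [one_add_abs_le_two_mul_one_add_abs_sub (y := s * x) (z := z) (by rwa [hsx])]
    have h4 : (4 : ℝ) ^ β = 2 ^ β * 2 ^ β := by
      rw [← Real.mul_rpow zero_le_two zero_le_two]; norm_num
    calc min 1 (|x| ^ (-β)) * ((1 + |z|) / (1 + |s * x - z|)) ^ β
        ≤ 2 ^ β * (1 + |x|) ^ (-β) * 2 ^ β := by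
          gcongr
          exact min_one_abs_rpow_neg_le hβ x
      _ = 4 ^ β * (1 + |x|) ^ (-β) := by rw [h4]; ring
      _ ≤ _ := le_add_of_nonneg_right (by positivity)
  · calc min 1 (|x| ^ (-β)) * ((1 + |z|) / (1 + |s * x - z|)) ^ β
        ≤ |x| ^ (-β) * (1 + |z|) ^ β * (1 + |s * x - z|) ^ (-β) := by
          rw [Real.div_rpow hz.le hd.le, div_eq_mul_inv, ← Real.rpow_neg hd.le, ← mul_assoc]
          gcongr
          exact min_le_right _ _
      _ ≤ (2 * s) ^ β * (1 + |s * x - z|) ^ (-β) := by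
          gcongr
          exact abs_rpow_neg_mul_rpow_le hβ hz.le (by linarith)
      _ = 2 ^ β * (s ^ β * (1 + |s * x - z|) ^ (-β)) := by
          rw [Real.mul_rpow zero_le_two hs, mul_assoc]
      _ ≤ _ := le_add_of_nonneg_left (by positivity)

lemma integral_min_one_mul_weight_ratio_le {β s : ℝ} (hβ : 1 < β) (hs : 0 ≤ s) (z : ℝ) :
    ∫ x : ℝ, min 1 (|x| ^ (-β)) * ((1 + |z|) / (1 + |s * x - z|)) ^ β ≤
      (4 ^ β + 2 ^ β * s ^ (β - 1)) * ∫ u : ℝ, (1 + |u|) ^ (-β) := by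
  have hw := integrable_one_add_abs_rpow_neg hβ
  have hdom : Integrable fun x : ℝ =>
      4 ^ β * (1 + |x|) ^ (-β) + 2 ^ β * (s ^ β * (1 + |s * x - z|) ^ (-β)) :=
    (hw.const_mul _).add ((integrable_rpow_mul_one_add_abs_mul_sub_rpow_neg hβ hs z).const_mul _)
  calc _ ≤ ∫ x : ℝ, 4 ^ β * (1 + |x|) ^ (-β) + 2 ^ β * (s ^ β * (1 + |s * x - z|) ^ (-β)) :=
        integral_mono_of_nonneg (.of_forall fun x => by positivity) hdom
          (.of_forall (min_one_mul_weight_ratio_le (by linarith) hs · z))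
    _ = _ := by
        rw [integral_add (hw.const_mul _)
            ((integrable_rpow_mul_one_add_abs_mul_sub_rpow_neg hβ hs z).const_mul _),
          integral_const_mul, integral_const_mul,
          integral_rpow_mul_one_add_abs_mul_sub_rpow_neg hβ hs z]
        ring

theorem scaled_weight_ratio_integral_bound_general (H α T : ℝ)
    (hH : H ∈ Set.Ioo (0:ℝ) (1/2)) (hα : α ∈ Set.Ioo (1:ℝ) 2) :
    ∃ M : ℝ, ∀ t ∈ Set.Icc (0:ℝ) T, ∀ z : ℝ,
      (∫ x : ℝ, min 1 (|x| ^ (2 * H - 2)) *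
        ((1 + |z|) / (1 + |t ^ (1/α) * x - z|)) ^ (2 - 2 * H)) ≤ M := by
  set β := 2 - 2 * H
  have hβ : 1 < β := by linarith [hH.2]
  have hexp : 2 * H - 2 = -β := by ring
  have hinv : 0 ≤ 1 / α := by linarith [one_div_pos.2 (zero_lt_one.trans hα.1)]
  refine ⟨(4 ^ β + 2 ^ β * (T ^ (1 / α)) ^ (β - 1)) * ∫ u : ℝ, (1 + |u|) ^ (-β), ?_⟩
  intro t ⟨ht0, htT⟩ z
  have hs : 0 ≤ t ^ (1 / α) := Real.rpow_nonneg ht0 _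
  rw [hexp]
  refine (integral_min_one_mul_weight_ratio_le hβ hs z).trans ?_
  gcongr

theorem scaled_weight_ratio_integral_bound (H α T : ℝ)
    (hH : H ∈ Set.Ioo (0:ℝ) (1/2)) (hα : α ∈ Set.Ioo (1:ℝ) 2) (hT : 0 < T) :
    ∃ M : ℝ, ∀ t ∈ Set.Icc (0:ℝ) T, ∀ z : ℝ,
      (∫ x : ℝ, min 1 (|x| ^ (2 * H - 2)) *
        ((1 + |z|) / (1 + |t ^ (1/α) * x - z|)) ^ (2 - 2 * H)) ≤ M :=
  scaled_weight_ratio_integral_bound_general H α T hH hα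
end
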